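/- arXiv:1409.5008 — 4 statements merged into one kernel-verified Lean document; each statement's English description precedes it below -/
import Mathlib

section
/- Let P be a polytope with nonempty interior and Q a polytope with 0 ∈ int Q. The bilinear problem sup{x^T z : (x,z) ∈ P × Q°} has finitely many optimal solutions if and only if every optimal solution is a pair of vertices of P and Q°. -/
open Matrix Set

/-- Extreme points of an H-polyhedron are finite. -/
lemma hpoly_extremePoints_finite {n d : ℕ} (c : Fin n → ℝ) (M : Fin n → Fin d → ℝ) :
    (Set.extremePoints ℝ {x : Fin d → ℝ | ∀ i, M i ⬝ᵥ x ≤ c i}).Finite := by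
  set S : Set (Fin d → ℝ) := {x | ∀ i, M i ⬝ᵥ x ≤ c i} with hSdef
  have hinj : Set.InjOn (fun x => {i | M i ⬝ᵥ x = c i}) (Set.extremePoints ℝ S) := by
    intro x hx y hy hxy
    by_contra hne
    rw [mem_extremePoints] at hx
    obtain ⟨hxS, hxe⟩ := hx
    have hxy' : ∀ i, M i ⬝ᵥ x = c i → M i ⬝ᵥ y = c i := by
      intro i hi
      have h := Set.ext_iff.1 hxy i
      exact h.1 hi
    have hexp : ∀ (i : Fin n) (t : ℝ),
        M i ⬝ᵥ (x + t • (x - y)) = M i ⬝ᵥ x + t * (M i ⬝ᵥ x - M i ⬝ᵥ y) := by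
      intro i t
      simp only [dotProduct_add, dotProduct_smul, dotProduct_sub, smul_eq_mul]
    have hev : ∀ᶠ t : ℝ in nhds 0, ∀ i, M i ⬝ᵥ (x + t • (x - y)) ≤ c i := by
      rw [Filter.eventually_all]
      intro i
      by_cases hact : M i ⬝ᵥ x = c i
      · have hacty := hxy' i hact
        apply Filter.Eventually.of_forall
        intro t
        rw [hexp, hact, hacty]
        simp
      · have hlt : M i ⬝ᵥ x < c i := lt_of_le_of_ne (hxS i) hact
        have htend : Filter.Tendsto (fun t : ℝ => M i ⬝ᵥ x + t * (M i ⬝ᵥ x - M i ⬝ᵥ y))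
            (nhds 0) (nhds (M i ⬝ᵥ x)) := by
          have hc : Continuous fun t : ℝ => M i ⬝ᵥ x + t * (M i ⬝ᵥ x - M i ⬝ᵥ y) :=
            continuous_const.add (continuous_id.mul continuous_const)
          have := hc.tendsto 0
          simpa using this
        have := htend.eventually_lt_const hlt
        filter_upwards [this] with t ht
        rw [hexp]
        exact ht.le
    rw [Metric.eventually_nhds_iff] at hev
    obtain ⟨δ, hδ, hball⟩ := hev
    set ε : ℝ := δ / 2 with hε
    have hεpos : 0 < ε := by positivity
    have hu : x + ε • (x - y) ∈ S := by
      apply hball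
      rw [Real.dist_eq, sub_zero, abs_of_pos hεpos]
      rw [hε]; linarith
    have hv : x + (-ε) • (x - y) ∈ S := by
      apply hball
      rw [Real.dist_eq, sub_zero, abs_neg, abs_of_pos hεpos]
      rw [hε]; linarith
    have hseg : x ∈ openSegment ℝ (x + ε • (x - y)) (x + (-ε) • (x - y)) := by
      refine ⟨1/2, 1/2, by norm_num, by norm_num, by norm_num, ?_⟩
      module
    have heq := (hxe _ hu _ hv hseg).1
    have h0 : ε • (x - y) = 0 := by
      have : x + ε • (x - y) = x + 0 := by rw [heq, add_zero]
      exact add_left_cancel this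
    rcases smul_eq_zero.1 h0 with h | h
    · exact absurd h hεpos.ne'
    · exact hne (sub_eq_zero.1 h)
  have himg : ((fun x => {i | M i ⬝ᵥ x = c i}) '' (Set.extremePoints ℝ S)).Finite :=
    Set.toFinite _
  exact Set.Finite.of_finite_image himg hinj

/-- If a linear functional is maximized on a convex set at a non-extreme point,
the set of maximizers is infinite. -/
lemma core_infinite {d : ℕ} {S : Set (Fin d → ℝ)} (hS : Convex ℝ S)
    {φ : (Fin d → ℝ) → ℝ}
    (hφ : ∀ (s t : ℝ) (y z : Fin d → ℝ), φ (s • y + t • z) = s * φ y + t * φ z)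
    {x : Fin d → ℝ} (hx : x ∈ S) (hmax : ∀ y ∈ S, φ y ≤ φ x)
    (hne : x ∉ Set.extremePoints ℝ S) :
    {y | y ∈ S ∧ φ y = φ x}.Infinite := by
  rw [mem_extremePoints] at hne
  push_neg at hne
  obtain ⟨x₁, hx₁, x₂, hx₂, hseg, hne2⟩ := hne hx
  obtain ⟨s, t, hs, ht, hst, hsum⟩ := hseg
  have hx12 : x₁ ≠ x₂ := by
    rintro rfl
    have hxx : x₁ = x := by
      have : s • x₁ + t • x₁ = (1 : ℝ) • x₁ := by rw [← add_smul, hst]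
      rw [this, one_smul] at hsum
      exact hsum
    exact hne2 hxx hxx
  have hv : φ x = s * φ x₁ + t * φ x₂ := by rw [← hsum, hφ]
  have h1 : φ x₁ ≤ φ x := hmax x₁ hx₁
  have h2 : φ x₂ ≤ φ x := hmax x₂ hx₂
  have hφx : s * φ x + t * φ x = φ x := by rw [← add_mul, hst, one_mul]
  have hv1 : φ x₁ = φ x := by
    have hx2' : t * φ x₂ ≤ t * φ x := mul_le_mul_of_nonneg_left h2 ht.le
    have hge : s * φ x ≤ s * φ x₁ := by linarith
    exact le_antisymm h1 (le_of_mul_le_mul_left hge hs)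
  have hv2 : φ x₂ = φ x := by
    have hx1' : s * φ x₁ ≤ s * φ x := mul_le_mul_of_nonneg_left h1 hs.le
    have hge : t * φ x ≤ t * φ x₂ := by linarith
    exact le_antisymm h2 (le_of_mul_le_mul_left hge ht)
  set f : ℝ → (Fin d → ℝ) := fun u => (1 - u) • x₁ + u • x₂ with hf
  have hsub : f '' (Set.Icc 0 1) ⊆ {y | y ∈ S ∧ φ y = φ x} := by
    rintro _ ⟨u, ⟨hu0, hu1⟩, rfl⟩
    refine ⟨hS hx₁ hx₂ (by linarith) hu0 (by ring), ?_⟩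
    show φ ((1 - u) • x₁ + u • x₂) = φ x
    rw [hφ, hv1, hv2]
    ring
  have hinjf : Set.InjOn f (Set.Icc 0 1) := by
    intro u _ w _ huw
    by_contra hne3
    simp only [hf] at huw
    have hz : (u - w) • (x₂ - x₁) = 0 := by
      rw [show (u - w) • (x₂ - x₁)
            = ((1 - u) • x₁ + u • x₂) - ((1 - w) • x₁ + w • x₂) from by module,
        huw, sub_self]
    rcases smul_eq_zero.1 hz with h | h
    · exact hne3 (by linarith [sub_eq_zero.1 h])
    · exact hx12 (sub_eq_zero.1 h).symm
  exact Set.Infinite.mono hsub ((Set.Icc_infinite (by norm_num)).image hinjf)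

/-- the bilinear problem has finitely many optimal solutions iff
every optimal solution is a pair of vertices (extreme points) of P and Q°. -/
theorem finite_optimal_iff_vertex_pairs
    {d k l : ℕ} (a : Fin k → ℝ) (A : Fin k → Fin d → ℝ) (b : Fin l → Fin d → ℝ)
    (P : Set (Fin d → ℝ)) (hPdef : P = {x | ∀ i, 0 ≤ a i - A i ⬝ᵥ x})
    (hPint : (interior P).Nonempty) (hPbd : Bornology.IsBounded P)
    (Q : Set (Fin d → ℝ)) (hQdef : Q = convexHull ℝ (Set.range b))
    (hQ0 : (0 : Fin d → ℝ) ∈ interior Q)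
    (Qpol : Set (Fin d → ℝ)) (hQpol : Qpol = {z | ∀ i, b i ⬝ᵥ z ≤ 1})
    (Opt : Set ((Fin d → ℝ) × (Fin d → ℝ)))
    (hOpt : Opt = {p | p.1 ∈ P ∧ p.2 ∈ Qpol ∧
      ∀ x ∈ P, ∀ z ∈ Qpol, x ⬝ᵥ z ≤ p.1 ⬝ᵥ p.2}) :
    Opt.Finite ↔
      ∀ p ∈ Opt, p.1 ∈ Set.extremePoints ℝ P ∧ p.2 ∈ Set.extremePoints ℝ Qpol := by
  have hPset : P = {x : Fin d → ℝ | ∀ i, A i ⬝ᵥ x ≤ a i} := by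
    rw [hPdef]; ext x; simp [sub_nonneg]
  have hPconv : Convex ℝ P := by
    rw [hPset]
    intro x hx y hy s t hs ht hst i
    have hx' := hx i
    have hy' := hy i
    have hdot : A i ⬝ᵥ (s • x + t • y) = s * (A i ⬝ᵥ x) + t * (A i ⬝ᵥ y) := by
      simp [dotProduct_add, dotProduct_smul, smul_eq_mul]
    show A i ⬝ᵥ (s • x + t • y) ≤ a i
    rw [hdot]
    calc s * (A i ⬝ᵥ x) + t * (A i ⬝ᵥ y) ≤ s * a i + t * a i :=
          add_le_add (mul_le_mul_of_nonneg_left hx' hs) (mul_le_mul_of_nonneg_left hy' ht)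
      _ = a i := by rw [← add_mul, hst, one_mul]
  have hQconv : Convex ℝ Qpol := by
    rw [hQpol]
    intro x hx y hy s t hs ht hst i
    have hx' := hx i
    have hy' := hy i
    have hdot : b i ⬝ᵥ (s • x + t • y) = s * (b i ⬝ᵥ x) + t * (b i ⬝ᵥ y) := by
      simp [dotProduct_add, dotProduct_smul, smul_eq_mul]
    show b i ⬝ᵥ (s • x + t • y) ≤ 1
    rw [hdot]
    calc s * (b i ⬝ᵥ x) + t * (b i ⬝ᵥ y) ≤ s * 1 + t * 1 :=
          add_le_add (mul_le_mul_of_nonneg_left hx' hs) (mul_le_mul_of_nonneg_left hy' ht)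
      _ = 1 := by rw [mul_one, mul_one, hst]
  constructor
  · intro hfin p hp
    rw [hOpt] at hp
    obtain ⟨hp1, hp2, hmax⟩ := hp
    constructor
    · by_contra hnotex
      have hφ1 : ∀ (s t : ℝ) (y z : Fin d → ℝ),
          (fun y => y ⬝ᵥ p.2) (s • y + t • z)
            = s * (fun y => y ⬝ᵥ p.2) y + t * (fun y => y ⬝ᵥ p.2) z := by
        intro s t y z
        simp [add_dotProduct, smul_dotProduct, smul_eq_mul]
      have hinf := core_infinite hPconv (φ := fun y => y ⬝ᵥ p.2) hφ1
        hp1 (fun y hy => hmax y hy p.2 hp2) hnotex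
      have hsub : (fun y => (y, p.2)) '' {y | y ∈ P ∧ y ⬝ᵥ p.2 = p.1 ⬝ᵥ p.2} ⊆ Opt := by
        rintro _ ⟨y, ⟨hyP, hyv⟩, rfl⟩
        rw [hOpt]
        exact ⟨hyP, hp2, fun x hx z hz => (hmax x hx z hz).trans_eq hyv.symm⟩
      have hinjm : Set.InjOn (fun y => (y, p.2)) {y | y ∈ P ∧ y ⬝ᵥ p.2 = p.1 ⬝ᵥ p.2} :=
        fun y _ z _ h => congrArg Prod.fst h
      exact (Set.Infinite.mono hsub (hinf.image hinjm)) hfin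
    · by_contra hnotex
      have hφ2 : ∀ (s t : ℝ) (y z : Fin d → ℝ),
          (fun z => p.1 ⬝ᵥ z) (s • y + t • z)
            = s * (fun z => p.1 ⬝ᵥ z) y + t * (fun z => p.1 ⬝ᵥ z) z := by
        intro s t y z
        simp [dotProduct_add, dotProduct_smul, smul_eq_mul]
      have hinf := core_infinite hQconv (φ := fun z => p.1 ⬝ᵥ z) hφ2
        hp2 (fun z hz => hmax p.1 hp1 z hz) hnotex
      have hsub : (fun z => (p.1, z)) '' {z | z ∈ Qpol ∧ p.1 ⬝ᵥ z = p.1 ⬝ᵥ p.2} ⊆ Opt := by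
        rintro _ ⟨z, ⟨hzQ, hzv⟩, rfl⟩
        rw [hOpt]
        exact ⟨hp1, hzQ, fun x hx w hw => (hmax x hx w hw).trans_eq hzv.symm⟩
      have hinjm : Set.InjOn (fun z => (p.1, z)) {z | z ∈ Qpol ∧ p.1 ⬝ᵥ z = p.1 ⬝ᵥ p.2} :=
        fun y _ z _ h => congrArg Prod.snd h
      exact (Set.Infinite.mono hsub (hinf.image hinjm)) hfin
  · intro hvert
    have hPfin : (Set.extremePoints ℝ P).Finite := by
      rw [hPset]
      exact hpoly_extremePoints_finite a A
    have hQfin : (Set.extremePoints ℝ Qpol).Finite := by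
      rw [hQpol]
      exact hpoly_extremePoints_finite (fun _ : Fin l => (1 : ℝ)) b
    apply Set.Finite.subset (hPfin.prod hQfin)
    intro p hp
    exact ⟨(hvert p hp).1, (hvert p hp).2⟩
end

section
/- Let G = {g_1,...,g_k} ⊂ R[x] consist of affine-linear polynomials such that S = {x : g_i(x) ≥ 0 ∀i} is nonempty and compact. Then the quadratic module QM(G) is Archimedean. -/
/-!
Compactness bounds `S` by a box `|x_j| ≤ c`, so each `c ± x_j` is an affine function that is
nonnegative on the nonempty polyhedron `S`. By the affine Farkas lemma it is a nonnegative
combination of `1` and the `g_i`, hence lies in `QM(G)`. The identity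
`2c (c² - x_j²) = (c + x_j)² (c - x_j) + (c - x_j)² (c + x_j)` then puts `c² - x_j²` in `QM(G)`,
and `N - Σ x_j² = (N - d c²) + Σ (c² - x_j²)` for any integer `N ≥ d c²`.
Farkas' lemma comes from separating a point from a finitely generated cone by a hyperplane; such a
cone is closed because, by Carathéodory's theorem, it is a finite union of images of closed orthants
under injective linear maps.
-/

open MvPolynomial

/-- A polynomial is a sum of squares. -/
def IsSOS {d : ℕ} (p : MvPolynomial (Fin d) ℝ) : Prop :=
  ∃ (n : ℕ) (h : Fin n → MvPolynomial (Fin d) ℝ), p = ∑ i, h i ^ 2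

open Set PointedCone Matrix

namespace PointedCone

section OrderedField

variable {𝕜 E ι : Type*} [Field 𝕜] [LinearOrder 𝕜] [IsStrictOrderedRing 𝕜]
  [AddCommGroup E] [Module 𝕜 E]

theorem mem_hull_range_iff [Fintype ι] {v : ι → E} {x : E} :
    x ∈ hull 𝕜 (range v) ↔ ∃ c : ι → 𝕜, 0 ≤ c ∧ ∑ i, c i • v i = x := by
  rw [Submodule.mem_span_range_iff_exists_fun]
  constructor
  · rintro ⟨c, rfl⟩
    exact ⟨fun i => c i, fun i => (c i).2, rfl⟩
  · rintro ⟨c, hc, rfl⟩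
    exact ⟨fun i => ⟨c i, hc i⟩, rfl⟩

theorem exists_sub_smul_nonneg_apply_eq_zero [Fintype ι] {c d : ι → 𝕜} (hc : 0 ≤ c)
    (hd : ∃ i, 0 < d i) : ∃ (i₀ : ι) (t : 𝕜), 0 ≤ c - t • d ∧ (c - t • d) i₀ = 0 := by
  classical
  obtain ⟨i₀, hi₀, hmin⟩ := Finset.exists_min_image {i | 0 < d i} (fun i => c i / d i)
    (by simpa [Finset.Nonempty] using hd)
  replace hi₀ : 0 < d i₀ := by simpa using hi₀
  refine ⟨i₀, c i₀ / d i₀, fun i => ?_, by simp [hi₀.ne']⟩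
  have ht : 0 ≤ c i₀ / d i₀ := div_nonneg (hc i₀) hi₀.le
  rcases lt_or_ge 0 (d i) with hdi | hdi
  · have := hmin i (by simpa using hdi)
    rw [div_le_div_iff₀ hi₀ hdi] at this
    simp only [Pi.sub_apply, Pi.smul_apply, smul_eq_mul, Pi.zero_apply, sub_nonneg]
    rw [div_mul_eq_mul_div, div_le_iff₀ hi₀]
    linarith
  · simp only [Pi.sub_apply, Pi.smul_apply, smul_eq_mul, Pi.zero_apply, sub_nonneg]
    exact (mul_nonpos_of_nonneg_of_nonpos ht hdi).trans (hc i)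

theorem hull_range_subset_iUnion_hull_range_succAbove {m : ℕ} {v : Fin (m + 1) → E}
    (hv : ¬ LinearIndependent 𝕜 v) :
    (hull 𝕜 (range v) : Set E) ⊆ ⋃ i : Fin (m + 1), hull 𝕜 (range (v ∘ i.succAbove)) := by
  intro x hx
  obtain ⟨c, hc, rfl⟩ := mem_hull_range_iff.1 hx
  obtain ⟨d, hrel, i₁, hi₁⟩ := Fintype.not_linearIndependent_iff.1 hv
  obtain ⟨d, hrel, hpos⟩ : ∃ d : Fin (m + 1) → 𝕜, ∑ i, d i • v i = 0 ∧ ∃ i, 0 < d i := by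
    rcases hi₁.lt_or_gt with h | h
    · exact ⟨-d, by simp [hrel], i₁, by simpa using h⟩
    · exact ⟨d, hrel, i₁, h⟩
  obtain ⟨i₀, t, hnonneg, hzero⟩ := exists_sub_smul_nonneg_apply_eq_zero hc hpos
  have hsum : ∑ i, c i • v i = ∑ i, (c - t • d) i • v i := by
    simp [sub_smul, Finset.sum_sub_distrib, mul_smul, ← Finset.smul_sum, hrel]
  refine mem_iUnion.2 ⟨i₀, mem_hull_range_iff.2 ⟨(c - t • d) ∘ i₀.succAbove,
    fun j => hnonneg _, ?_⟩⟩
  rw [hsum, Fin.sum_univ_succAbove _ i₀, hzero, zero_smul, zero_add]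
  rfl

end OrderedField

variable {E ι : Type*} [AddCommGroup E] [Module ℝ E] [TopologicalSpace E]
  [IsTopologicalAddGroup E] [ContinuousSMul ℝ E] [T2Space E]

theorem isClosed_hull_range_of_linearIndependent [Fintype ι] {v : ι → E}
    (hv : LinearIndependent ℝ v) : IsClosed (hull ℝ (range v) : Set E) := by
  have hemb := LinearMap.isClosedEmbedding_of_injective (LinearMap.ker_eq_bot.2
    (linearIndependent_iff_injective_fintypeLinearCombination.1 hv))
  convert hemb.isClosedMap _ (isClosed_Ici (a := (0 : ι → ℝ))) using 1
  ext x
  simp [mem_hull_range_iff, Fintype.linearCombination_apply]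

theorem isClosed_hull_range_fin : ∀ {m : ℕ} (v : Fin m → E), IsClosed (hull ℝ (range v) : Set E)
  | 0, v => isClosed_hull_range_of_linearIndependent (linearIndependent_empty_type)
  | m + 1, v => by
    by_cases hv : LinearIndependent ℝ v
    · exact isClosed_hull_range_of_linearIndependent hv
    · convert isClosed_iUnion_of_finite fun i : Fin (m + 1) =>
        isClosed_hull_range_fin (v ∘ i.succAbove)
      refine (hull_range_subset_iUnion_hull_range_succAbove hv).antisymm (iUnion_subset fun i => ?_)
      exact Submodule.span_mono (range_comp_subset_range _ _)

theorem isClosed_hull_range [Finite ι] (v : ι → E) : IsClosed (hull ℝ (range v) : Set E) := by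
  obtain ⟨m, ⟨e⟩⟩ := Finite.exists_equiv_fin ι
  rw [← e.symm.surjective.range_comp]
  exact isClosed_hull_range_fin _

theorem exists_strongDual_nonneg_of_notMem_hull_range [LocallyConvexSpace ℝ E] [Finite ι]
    {v : ι → E} {u : E} (hu : u ∉ hull ℝ (range v)) :
    ∃ f : StrongDual ℝ E, (∀ i, 0 ≤ f (v i)) ∧ f u < 0 := by
  obtain ⟨f, hf, hfu⟩ :=
    ProperCone.hyperplane_separation_point ⟨hull ℝ (range v), isClosed_hull_range v⟩ hu
  exact ⟨f, fun i => hf _ (subset_hull (mem_range_self i)), hfu⟩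

end PointedCone

section AffineFarkas

variable {ι κ : Type*} [Fintype ι] {b : κ → ℝ} {a : κ → ι → ℝ} {c : ℝ} {l : ι → ℝ}

theorem LinearMap.apply_prod_eq_mul_add_dotProduct [DecidableEq ι] (f : ℝ × (ι → ℝ) →ₗ[ℝ] ℝ)
    (β : ℝ) (α : ι → ℝ) : f (β, α) = β * f (1, 0) + α ⬝ᵥ fun j => f (0, Pi.single j 1) := by
  have hdecomp : (β, α) = β • ((1 : ℝ), (0 : ι → ℝ)) + ∑ j, α j • ((0 : ℝ), Pi.single j 1) := by
    ext j <;> simp [Prod.fst_sum, Prod.snd_sum, Pi.single_apply]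
  rw [hdecomp, map_add, map_smul, map_sum]
  simp only [map_smul, smul_eq_mul, dotProduct]

theorem dotProduct_nonneg_of_recession (hne : ∃ x, ∀ i, 0 ≤ b i + a i ⬝ᵥ x)
    (hnonneg : ∀ x, (∀ i, 0 ≤ b i + a i ⬝ᵥ x) → 0 ≤ c + l ⬝ᵥ x) {y : ι → ℝ}
    (hy : ∀ i, 0 ≤ a i ⬝ᵥ y) : 0 ≤ l ⬝ᵥ y := by
  obtain ⟨x₀, hx₀⟩ := hne
  by_contra! hly
  set s := (c + l ⬝ᵥ x₀ + 1) / -(l ⬝ᵥ y)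
  have hs : 0 ≤ s := div_nonneg (by linarith [hnonneg x₀ hx₀]) (by linarith)
  have hsl : s * -(l ⬝ᵥ y) = c + l ⬝ᵥ x₀ + 1 := div_mul_cancel₀ _ (by linarith)
  rw [mul_neg] at hsl
  have := hnonneg (x₀ + s • y) fun i => by
    rw [dotProduct_add, dotProduct_smul, smul_eq_mul, ← add_assoc]
    exact add_nonneg (hx₀ i) (mul_nonneg hs (hy i))
  simp only [dotProduct_add, dotProduct_smul, smul_eq_mul] at this
  linarith

theorem homogenization_nonneg (hne : ∃ x, ∀ i, 0 ≤ b i + a i ⬝ᵥ x)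
    (hnonneg : ∀ x, (∀ i, 0 ≤ b i + a i ⬝ᵥ x) → 0 ≤ c + l ⬝ᵥ x) {t : ℝ} (ht : 0 ≤ t) {y : ι → ℝ}
    (hy : ∀ i, 0 ≤ b i * t + a i ⬝ᵥ y) : 0 ≤ c * t + l ⬝ᵥ y := by
  rcases ht.eq_or_lt with rfl | ht
  · simpa using dotProduct_nonneg_of_recession hne hnonneg (by simpa using hy)
  · have hscale : ∀ β α, t * (β + α ⬝ᵥ t⁻¹ • y) = β * t + α ⬝ᵥ y := fun β α => by
      rw [dotProduct_smul, smul_eq_mul, mul_add, mul_inv_cancel_left₀ ht.ne', mul_comm]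
    rw [← hscale]
    exact mul_nonneg ht.le <|
      hnonneg _ fun i => (mul_nonneg_iff_of_pos_left ht).1 (hscale _ _ ▸ hy i)

theorem exists_nonneg_combination_of_nonneg_on [Fintype κ]
    (hne : ∃ x, ∀ i, 0 ≤ b i + a i ⬝ᵥ x)
    (hnonneg : ∀ x, (∀ i, 0 ≤ b i + a i ⬝ᵥ x) → 0 ≤ c + l ⬝ᵥ x) :
    ∃ μ₀ : ℝ, 0 ≤ μ₀ ∧ ∃ μ : κ → ℝ, 0 ≤ μ ∧
      ∀ x, c + l ⬝ᵥ x = μ₀ + ∑ i, μ i * (b i + a i ⬝ᵥ x) := by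
  -- `(β, α)` stands for the affine function `x ↦ β + α ⬝ᵥ x`, and `none` for the constant `1`.
  let v : Option κ → ℝ × (ι → ℝ) := fun o => o.elim (1, 0) fun i => (b i, a i)
  obtain ⟨μ, hμ, hsum⟩ : ∃ μ : Option κ → ℝ, 0 ≤ μ ∧ ∑ o, μ o • v o = (c, l) := by
    rw [← mem_hull_range_iff]
    classical
    by_contra hcl
    obtain ⟨f, hf, hfcl⟩ := exists_strongDual_nonneg_of_notMem_hull_range hcl
    have hform := (f : ℝ × (ι → ℝ) →ₗ[ℝ] ℝ).apply_prod_eq_mul_add_dotProduct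
    simp only [ContinuousLinearMap.coe_coe] at hform
    refine hfcl.not_ge ?_
    rw [hform]
    exact homogenization_nonneg hne hnonneg (hf none) fun i => hform _ _ ▸ hf (some i)
  refine ⟨μ none, hμ none, fun i => μ (some i), fun i => hμ (some i), fun x => ?_⟩
  have hfst := congrArg Prod.fst hsum
  have hsnd := congrArg (· ⬝ᵥ x) (congrArg Prod.snd hsum)
  simp only [Fintype.sum_option, Option.elim_none, Option.elim_some, v, Prod.smul_mk,
    smul_eq_mul, mul_one, smul_zero, Prod.fst_add, Prod.fst_sum, Prod.snd_add, Prod.snd_sum,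
    zero_add, sum_dotProduct, smul_dotProduct] at hfst hsnd
  rw [← hfst, ← hsnd]
  simp only [mul_add, Finset.sum_add_distrib]
  ring

end AffineFarkas

namespace MvPolynomial

variable {R σ : Type*} [CommSemiring R] [Fintype σ]

theorem eq_C_add_sum_C_mul_X_of_totalDegree_le_one {p : MvPolynomial σ R}
    (hp : p.totalDegree ≤ 1) :
    p = C (coeff 0 p) + ∑ j, C (coeff (Finsupp.single j 1) p) * X j := by
  classical
  ext m
  simp only [coeff_add, coeff_C, coeff_sum, coeff_C_mul, coeff_X, mul_ite, mul_one, mul_zero]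
  obtain hm | hm | hm : m.degree = 0 ∨ m.degree = 1 ∨ 1 < m.degree := by omega
  · rw [Finsupp.degree_eq_zero_iff] at hm
    subst hm
    simp
  · obtain ⟨j, rfl⟩ := (Finsupp.range_single_one (σ := σ)).symm.subset hm
    simp [Finsupp.single_left_inj, (Finsupp.single_ne_zero.2 one_ne_zero).symm]
  · have hne : ∀ j, Finsupp.single j 1 ≠ m := fun j h => by simp [← h] at hm
    rw [coeff_eq_zero_of_totalDegree_lt (hp.trans_lt hm)]
    simp [hne, show (0 : σ →₀ ℕ) ≠ m by rintro rfl; simp at hm]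

theorem eval_eq_coeff_zero_add_dotProduct {p : MvPolynomial σ ℝ} (hp : p.totalDegree ≤ 1)
    (x : σ → ℝ) : eval x p = coeff 0 p + (fun j => coeff (Finsupp.single j 1) p) ⬝ᵥ x := by
  conv_lhs => rw [eq_C_add_sum_C_mul_X_of_totalDegree_le_one hp]
  simp [dotProduct]

end MvPolynomial

def quadraticModule {R ι : Type*} [CommSemiring R] [Fintype ι] (g : ι → R) : AddSubmonoid R where
  carrier :=
    {p | ∃ (σ₀ : R) (σ : ι → R), IsSumSq σ₀ ∧ (∀ i, IsSumSq (σ i)) ∧ p = σ₀ + ∑ i, σ i * g i}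
  zero_mem' := ⟨0, 0, .zero, fun _ => .zero, by simp⟩
  add_mem' := by
    rintro _ _ ⟨σ₀, σ, hσ₀, hσ, rfl⟩ ⟨τ₀, τ, hτ₀, hτ, rfl⟩
    refine ⟨σ₀ + τ₀, σ + τ, hσ₀.add hτ₀, fun i => (hσ i).add (hτ i), ?_⟩
    simp only [Pi.add_apply, add_mul, Finset.sum_add_distrib]
    ring

namespace quadraticModule

variable {R ι : Type*} [Fintype ι]

section CommSemiring

variable [CommSemiring R] {g : ι → R}

theorem mem_iff {p : R} : p ∈ quadraticModule g ↔
    ∃ (σ₀ : R) (σ : ι → R), IsSumSq σ₀ ∧ (∀ i, IsSumSq (σ i)) ∧ p = σ₀ + ∑ i, σ i * g i :=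
  Iff.rfl

theorem mem_of_isSumSq {s : R} (hs : IsSumSq s) : s ∈ quadraticModule g :=
  mem_iff.2 ⟨s, 0, hs, fun _ => .zero, by simp⟩

theorem apply_mem (i : ι) : g i ∈ quadraticModule g := by
  classical
  refine mem_iff.2 ⟨0, Pi.single i 1, .zero, fun j => ?_, by simp [Pi.single_apply]⟩
  rcases eq_or_ne j i with rfl | hj
  · simp
  · simp [hj, IsSumSq.zero]

theorem isSumSq_mul_mem {s p : R} (hs : IsSumSq s) (hp : p ∈ quadraticModule g) :
    s * p ∈ quadraticModule g := by
  obtain ⟨σ₀, σ, hσ₀, hσ, rfl⟩ := mem_iff.1 hp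
  refine mem_iff.2 ⟨s * σ₀, fun i => s * σ i, hs.mul hσ₀, fun i => hs.mul (hσ i), ?_⟩
  simp only [mul_add, Finset.mul_sum, mul_assoc]

end CommSemiring

variable [CommRing R] [Algebra ℝ R] {g : ι → R}

theorem isSumSq_algebraMap {a : ℝ} (ha : 0 ≤ a) : IsSumSq (algebraMap ℝ R a) :=
  IsSquare.isSumSq ⟨algebraMap ℝ R √a, by rw [← map_mul, Real.mul_self_sqrt ha]⟩

theorem algebraMap_sq_sub_sq_mem {c : ℝ} (hc : 0 < c) {x : R}
    (hsub : algebraMap ℝ R c - x ∈ quadraticModule g)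
    (hadd : algebraMap ℝ R c + x ∈ quadraticModule g) :
    algebraMap ℝ R (c ^ 2) - x ^ 2 ∈ quadraticModule g := by
  have hinv : algebraMap ℝ R (2 * c)⁻¹ * (2 * algebraMap ℝ R c) = 1 := by
    rw [← map_ofNat (algebraMap ℝ R) 2, ← map_mul, ← map_mul, inv_mul_cancel₀ (by positivity),
      map_one]
  have hid : algebraMap ℝ R (c ^ 2) - x ^ 2 = algebraMap ℝ R (2 * c)⁻¹ *
      ((algebraMap ℝ R c + x) ^ 2 * (algebraMap ℝ R c - x) +
        (algebraMap ℝ R c - x) ^ 2 * (algebraMap ℝ R c + x)) := by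
    rw [map_pow]
    linear_combination (-(algebraMap ℝ R c ^ 2 - x ^ 2)) * hinv
  rw [hid]
  exact isSumSq_mul_mem (isSumSq_algebraMap (by positivity))
    (add_mem (isSumSq_mul_mem (IsSquare.sq _).isSumSq hsub)
      (isSumSq_mul_mem (IsSquare.sq _).isSumSq hadd))

theorem exists_natCast_sub_sum_sq_mem {κ : Type*} [Fintype κ] {x : κ → R} {c : ℝ} (hc : 0 < c)
    (hx : ∀ j, algebraMap ℝ R c - x j ∈ quadraticModule g ∧
      algebraMap ℝ R c + x j ∈ quadraticModule g) :
    ∃ N : ℕ, 0 < N ∧ (N : R) - ∑ j, x j ^ 2 ∈ quadraticModule g := by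
  set N := ⌈Fintype.card κ * c ^ 2⌉₊ + 1
  have hN : Fintype.card κ * c ^ 2 ≤ N := by
    simp only [N, Nat.cast_add, Nat.cast_one]
    linarith [Nat.le_ceil (Fintype.card κ * c ^ 2)]
  have hid : (N : R) - ∑ j, x j ^ 2 = algebraMap ℝ R (N - Fintype.card κ * c ^ 2) +
      ∑ j, (algebraMap ℝ R (c ^ 2) - x j ^ 2) := by
    simp [Finset.sum_sub_distrib, Finset.card_univ]
  refine ⟨N, Nat.succ_pos _, hid ▸ add_mem (mem_of_isSumSq (isSumSq_algebraMap (by linarith))) ?_⟩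
  exact sum_mem fun j _ => algebraMap_sq_sub_sq_mem hc (hx j).1 (hx j).2

end quadraticModule

theorem MvPolynomial.mem_quadraticModule_of_nonneg_on {σ κ : Type*} [Fintype σ] [Fintype κ]
    {g : κ → MvPolynomial σ ℝ} (hg : ∀ i, (g i).totalDegree ≤ 1) {p : MvPolynomial σ ℝ}
    (hp : p.totalDegree ≤ 1) (hne : ∃ x, ∀ i, 0 ≤ eval x (g i))
    (hnonneg : ∀ x, (∀ i, 0 ≤ eval x (g i)) → 0 ≤ eval x p) : p ∈ quadraticModule g := by
  simp only [eval_eq_coeff_zero_add_dotProduct (hg _), eval_eq_coeff_zero_add_dotProduct hp]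
    at hne hnonneg
  obtain ⟨μ₀, hμ₀, μ, hμ, hid⟩ := exists_nonneg_combination_of_nonneg_on hne hnonneg
  have hp_eq : p = C μ₀ + ∑ i, C (μ i) * g i := funext fun x => by
    simp [eval_eq_coeff_zero_add_dotProduct (hg _), eval_eq_coeff_zero_add_dotProduct hp, hid]
  rw [hp_eq, ← algebraMap_eq]
  exact add_mem (quadraticModule.mem_of_isSumSq (quadraticModule.isSumSq_algebraMap hμ₀))
    (sum_mem fun i _ => quadraticModule.isSumSq_mul_mem
      (quadraticModule.isSumSq_algebraMap (hμ i)) (quadraticModule.apply_mem i))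

theorem IsSumSq.isSOS {d : ℕ} {p : MvPolynomial (Fin d) ℝ} (hp : IsSumSq p) : IsSOS p := by
  induction hp with
  | zero => exact ⟨0, ![], by simp⟩
  | sq_add a _ ih =>
    obtain ⟨n, h, rfl⟩ := ih
    exact ⟨n + 1, Fin.cons a h, by simp [Fin.sum_univ_succ, sq]⟩

/-- if the g_i are affine-linear and S = {x : g_i(x) ≥ 0 ∀ i} is
nonempty and compact, then the quadratic module QM(g) is Archimedean, i.e.
N - Σ x_j² ∈ QM(g) for some positive integer N. -/
theorem quadraticModule_archimedean_of_linear_compact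
    {d k : ℕ} (g : Fin k → MvPolynomial (Fin d) ℝ)
    (hlin : ∀ i, (g i).totalDegree ≤ 1)
    (S : Set (Fin d → ℝ)) (hS : S = {x | ∀ i, 0 ≤ eval x (g i)})
    (hne : S.Nonempty) (hcpt : IsCompact S) :
    ∃ (N : ℕ), 0 < N ∧
      ∃ (σ₀ : MvPolynomial (Fin d) ℝ) (σ : Fin k → MvPolynomial (Fin d) ℝ),
        IsSOS σ₀ ∧ (∀ i, IsSOS (σ i)) ∧
        (C (N : ℝ) - ∑ j : Fin d, X j ^ 2) = σ₀ + ∑ i, σ i * g i := by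
  subst hS
  obtain ⟨c, hc, hbound⟩ := hcpt.isBounded.exists_pos_norm_le
  have hcoord : ∀ x ∈ {x | ∀ i, 0 ≤ eval x (g i)}, ∀ j, |x j| ≤ c := fun x hx j =>
    (norm_le_pi_norm x j).trans (hbound x hx)
  have hbox : ∀ j, C c - X j ∈ quadraticModule g ∧ C c + X j ∈ quadraticModule g := fun j =>
    ⟨mem_quadraticModule_of_nonneg_on hlin ((totalDegree_sub _ _).trans (by simp)) hne
      fun x hx => by simpa [sub_nonneg] using (abs_le.1 (hcoord x hx j)).2,
     mem_quadraticModule_of_nonneg_on hlin ((totalDegree_add _ _).trans (by simp)) hne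
      fun x hx => by simpa [neg_le_iff_add_nonneg'] using (abs_le.1 (hcoord x hx j)).1⟩
  obtain ⟨N, hN, hmem⟩ := quadraticModule.exists_natCast_sub_sum_sq_mem hc hbox
  obtain ⟨σ₀, σ, hσ₀, hσ, hid⟩ := quadraticModule.mem_iff.1 hmem
  exact ⟨N, hN, σ₀, σ, hσ₀.isSOS, fun i => (hσ i).isSOS, by rwa [map_natCast]⟩
end

section
/- Explicit sos certificate for cube in scaled cross-polytope: for any positive real e and dimension d, the identity d/e - x^T z = (1/(8e)) Σ_{i=1}^d [(1-x_i)((1+x_i)^2 + (1+e z_i)^2) + (1+x_i)((1-x_i)^2 + (1-e z_i)^2) + (1-e z_i)((1+x_i)^2 + (1+e z_i)^2) + (1+e z_i)((1-x_i)^2 + (1-e z_i)^2)] holds in R[x_1,...,x_d,z_1,...,z_d]. -/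
open Matrix

/-- explicit sos certificate identity for the cube in the scaled
cross-polytope: for every positive real e and all x, z ∈ ℝ^d,
d/e - xᵀz equals the stated sum of products of linear constraints with sums of
squares. -/
theorem cube_in_crosspolytope_sos_identity
    {d : ℕ} (e : ℝ) (he : 0 < e) (x z : Fin d → ℝ) :
    (d : ℝ) / e - x ⬝ᵥ z =
      (1 / (8 * e)) * ∑ i : Fin d,
        ((1 - x i) * ((1 + x i) ^ 2 + (1 + e * z i) ^ 2)
          + (1 + x i) * ((1 - x i) ^ 2 + (1 - e * z i) ^ 2)
          + (1 - e * z i) * ((1 + x i) ^ 2 + (1 + e * z i) ^ 2)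
          + (1 + e * z i) * ((1 - x i) ^ 2 + (1 - e * z i) ^ 2)) := by
  have h : ∀ i : Fin d,
      ((1 - x i) * ((1 + x i) ^ 2 + (1 + e * z i) ^ 2)
        + (1 + x i) * ((1 - x i) ^ 2 + (1 - e * z i) ^ 2)
        + (1 - e * z i) * ((1 + x i) ^ 2 + (1 + e * z i) ^ 2)
        + (1 + e * z i) * ((1 - x i) ^ 2 + (1 - e * z i) ^ 2))
      = 8 - 8 * (e * (x i * z i)) := by intro i; ring
  simp only [h, Finset.sum_sub_distrib, Finset.sum_const, Finset.card_univ,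
    Fintype.card_fin, ← Finset.mul_sum, dotProduct]
  field_simp
  ring
end

section
/- Explicit sos certificate for scaled cube in cube: for r = 1/√d, the identity 1 - x^T z = (1/2) Σ_{i=1}^d (x_i - z_i)^2 + 2^{-(d+1)} Σ_{v ∈ {-1,1}^d} (1 + v^T z)^2 (1 - v^T z) + (1/(4r)) Σ_{i=1}^d [(r + x_i)^2 (r - x_i) + (r - x_i)^2 (r + x_i)] holds in R[x,z]. -/
/-!
Write `t = v ⬝ᵥ z`, so that `(1 + t)² (1 - t) = 1 + (t - t³) - t²`. Summed over all sign vectors `v`,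
the odd part cancels under `v ↦ -v`, and `∑ᵥ t² = 2ᵈ ‖z‖²` because the cross terms `vᵢ vⱼ`
cancel under flipping the `i`-th sign. Hence the middle term equals `(1 - ‖z‖²) / 2`. The last
term equals `(d r² - ‖x‖²) / 2 = (1 - ‖x‖²) / 2`, and the first is `(‖x‖² - 2 x ⬝ᵥ z + ‖z‖²) / 2`.
-/

open Matrix Finset

variable {ι : Type*}

def signVector (s : ι → Bool) : ι → ℝ := fun i => if s i then 1 else -1

lemma signVector_not (s : ι → Bool) : signVector (fun i => !s i) = -signVector s := by
  ext i; cases h : s i <;> simp [signVector, h]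

lemma signVector_mul_self (s : ι → Bool) (i : ι) : signVector s i * signVector s i = 1 := by
  cases h : s i <;> simp [signVector, h]

lemma Function.Involutive.sum_eq_zero_of_comp_eq_neg {α M : Type*} [Fintype α] [AddCommGroup M]
    [IsAddTorsionFree M] {g : α → α} (hg : Involutive g) {f : α → M} (h : ∀ a, f (g a) = -f a) :
    ∑ a, f a = 0 := by
  have := Equiv.sum_comp (hg.toPerm g) f
  rwa [coe_toPerm, Fintype.sum_congr _ _ h, sum_neg_distrib, neg_eq_self] at this

variable [Fintype ι]

lemma sum_sub_sq_eq_dotProduct (x z : ι → ℝ) :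
    ∑ i, (x i - z i) ^ 2 = x ⬝ᵥ x - 2 * (x ⬝ᵥ z) + z ⬝ᵥ z := by
  have : ∑ i, (x i - z i) ^ 2 = (x - z) ⬝ᵥ (x - z) := by simp [dotProduct, sq]
  rw [this, sub_dotProduct, dotProduct_sub, dotProduct_sub, dotProduct_comm z x]
  ring

lemma sum_add_sq_mul_sub_add_sub_sq_mul_add (r : ℝ) (x : ι → ℝ) :
    ∑ i, ((r + x i) ^ 2 * (r - x i) + (r - x i) ^ 2 * (r + x i))
      = 2 * r * (Fintype.card ι * r ^ 2 - x ⬝ᵥ x) := by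
  have factor (a : ℝ) :
      (r + a) ^ 2 * (r - a) + (r - a) ^ 2 * (r + a) = 2 * r * (r ^ 2 - a * a) := by
    ring
  simp only [factor, ← mul_sum, sum_sub_distrib, sum_const, card_univ, nsmul_eq_mul, dotProduct]

variable [DecidableEq ι]

lemma sum_comp_signVector_dotProduct_eq_zero_of_odd {g : ℝ → ℝ} (hg : ∀ t, g (-t) = -g t)
    (z : ι → ℝ) :
    ∑ s : ι → Bool, g (signVector s ⬝ᵥ z) = 0 :=
  Function.Involutive.sum_eq_zero_of_comp_eq_neg (g := fun s i => !s i)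
    (fun s => by simp) fun s => by simp only [signVector_not, neg_dotProduct, hg]

lemma sum_signVector_mul_signVector (i j : ι) :
    ∑ s : ι → Bool, signVector s i * signVector s j = if i = j then 2 ^ Fintype.card ι else 0 := by
  split_ifs with hij
  · subst hij
    simp [signVector_mul_self]
  · refine Function.Involutive.sum_eq_zero_of_comp_eq_neg
      (g := fun s => Function.update s i (!s i)) (fun s => by simp) fun s => ?_
    simp only [signVector, Function.update_self, Function.update_of_ne (Ne.symm hij)]
    cases s i <;> cases s j <;> norm_num

lemma sum_sq_signVector_dotProduct (z : ι → ℝ) :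
    ∑ s : ι → Bool, (signVector s ⬝ᵥ z) ^ 2 = 2 ^ Fintype.card ι * (z ⬝ᵥ z) := by
  have expand (s : ι → Bool) : (signVector s ⬝ᵥ z) ^ 2
      = ∑ i, ∑ j, signVector s i * signVector s j * (z i * z j) := by
    simp only [sq, dotProduct, sum_mul_sum]
    exact sum_congr rfl fun i _ => sum_congr rfl fun j _ => by ring
  rw [sum_congr rfl fun s _ => expand s, sum_comm]
  simp_rw [sum_comm (s := univ (α := ι → Bool)), ← sum_mul, sum_signVector_mul_signVector]
  simp [dotProduct, mul_sum]

lemma sum_one_add_sq_mul_one_sub_signVector_dotProduct (z : ι → ℝ) :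
    ∑ s : ι → Bool, (1 + signVector s ⬝ᵥ z) ^ 2 * (1 - signVector s ⬝ᵥ z)
      = 2 ^ Fintype.card ι * (1 - z ⬝ᵥ z) := by
  have hodd :=
    sum_comp_signVector_dotProduct_eq_zero_of_odd (g := fun t => t - t ^ 3) (fun t => by ring) z
  calc ∑ s : ι → Bool, (1 + signVector s ⬝ᵥ z) ^ 2 * (1 - signVector s ⬝ᵥ z)
      = ∑ s : ι → Bool, (1 + ((signVector s ⬝ᵥ z) - (signVector s ⬝ᵥ z) ^ 3)
          - (signVector s ⬝ᵥ z) ^ 2) := sum_congr rfl fun s _ => by ring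
    _ = 2 ^ Fintype.card ι * (1 - z ⬝ᵥ z) := by
        rw [sum_sub_distrib, sum_add_distrib, hodd, sum_sq_signVector_dotProduct]
        simp [mul_sub]

/-- explicit sos certificate identity for the r-scaled H-cube in
the V-cube, with r = 1/√d. The middle sum ranges over all 2^d sign vectors
v ∈ {-1,1}^d, encoded by s : Fin d → Bool. -/
theorem scaled_cube_in_cube_sos_identity
    {d : ℕ} (hd : 0 < d) (r : ℝ) (hr : r = 1 / Real.sqrt d) (x z : Fin d → ℝ) :
    1 - x ⬝ᵥ z =
      (1 / 2) * (∑ i : Fin d, (x i - z i) ^ 2)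
      + (2 : ℝ) ^ (-(d : ℤ) - 1) *
          ∑ s : Fin d → Bool,
            (1 + (fun i => if s i then (1 : ℝ) else -1) ⬝ᵥ z) ^ 2 *
            (1 - (fun i => if s i then (1 : ℝ) else -1) ⬝ᵥ z)
      + (1 / (4 * r)) * ∑ i : Fin d,
          ((r + x i) ^ 2 * (r - x i) + (r - x i) ^ 2 * (r + x i)) := by
  have hd' : (0 : ℝ) < d := Nat.cast_pos.mpr hd
  have hr0 : r ≠ 0 := by rw [hr]; positivity
  have hdr : (d : ℝ) * r ^ 2 = 1 := by
    rw [hr, div_pow, Real.sq_sqrt hd'.le]; field_simp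
  have hpow : (2 : ℝ) ^ (-(d : ℤ) - 1) * 2 ^ d = 1 / 2 := by
    rw [← zpow_natCast, ← zpow_add₀ two_ne_zero, show -(d : ℤ) - 1 + d = -1 by ring]; norm_num
  have hsign := sum_one_add_sq_mul_one_sub_signVector_dotProduct z
  unfold signVector at hsign
  rw [hsign, sum_add_sq_mul_sub_add_sub_sq_mul_add, sum_sub_sq_eq_dotProduct, Fintype.card_fin]
  have hcoef : 1 / (4 * r) * (2 * r) = 1 / 2 := by field_simp; norm_num
  linear_combination -(1 - z ⬝ᵥ z) * hpow - (d * r ^ 2 - x ⬝ᵥ x) * hcoef - hdr / 2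
end
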